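/- There exists a constant C > 0 such that for every ε > 0 there exists δ > 0 with the following property: for every natural number d, every pair of vectors s = (s_1,…,s_d) and v = (v_1,…,v_d) in ℝ^d, and every real v₀ ∈ (0,δ) satisfying |v_j| < v₀ for all j = 1,…,d, one has | Σ_{j=1}^d φ(s_j + v_j) − Σ_{j=1}^d φ(s_j) | ≤ ε·Σ_{j=1}^d φ(s_j) + C·d·e^{−1/v₀}. -/

import Mathlib

open Real Set Finset

/-- The standard normal density `φ(x) = (2π)^{-1/2} e^{-x²/2}`. -/
noncomputable def phi (x : ℝ) : ℝ := Real.exp (-x ^ 2 / 2) / Real.sqrt (2 * Real.pi)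

/- Write `φ(x + w) = φ(x) e^{-t}` with `t = x w + w²/2`. For `|x| ≤ √(2/v₀) + v₀` and `|w| ≤ v₀`
the exponent is `O(√v₀)`, so `φ(x + w) - φ(x)` is a small relative error of `φ(x)`. Otherwise both
`|x|` and `|x + w|` are at least `√(2/v₀)`, so both densities, hence their difference, are at most
`e^{-1/v₀}`. Summing over the coordinates gives the theorem with `C = 1`. -/

lemma phi_pos (x : ℝ) : 0 < phi x := by
  unfold phi
  have := Real.pi_pos
  positivity

lemma phi_le_exp_of_le_abs {r x : ℝ} (hr : 0 ≤ r) (hx : r ≤ |x|) : phi x ≤ exp (-r ^ 2 / 2) := by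
  have hsq : r ^ 2 ≤ x ^ 2 := sq_abs x ▸ pow_le_pow_left₀ hr hx 2
  have hone : 1 ≤ √(2 * π) := Real.one_le_sqrt.mpr (by linarith [Real.pi_gt_three])
  calc phi x ≤ exp (-x ^ 2 / 2) := div_le_self (exp_pos _).le hone
    _ ≤ exp (-r ^ 2 / 2) := exp_le_exp.mpr (by linarith)

lemma abs_phi_sub_phi_le_of_le_abs {r x y : ℝ} (hr : 0 ≤ r) (hx : r ≤ |x|) (hy : r ≤ |y|) :
    |phi y - phi x| ≤ exp (-r ^ 2 / 2) :=
  abs_sub_le_of_nonneg_of_le (phi_pos y).le (phi_le_exp_of_le_abs hr hy)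
    (phi_pos x).le (phi_le_exp_of_le_abs hr hx)

lemma phi_add_sub_phi (x w : ℝ) :
    phi (x + w) - phi x = phi x * (exp (-(x * w + w ^ 2 / 2)) - 1) := by
  unfold phi
  rw [mul_sub, mul_one, div_mul_eq_mul_div, ← exp_add]
  ring_nf

lemma abs_phi_add_sub_phi_le {x w η : ℝ} (hη : |x * w + w ^ 2 / 2| ≤ η) (hη₁ : η ≤ 1) :
    |phi (x + w) - phi x| ≤ 2 * η * phi x := by
  have hexp : |exp (-(x * w + w ^ 2 / 2)) - 1| ≤ 2 * η := by
    have ht : |-(x * w + w ^ 2 / 2)| ≤ η := by rwa [abs_neg]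
    exact (abs_exp_sub_one_le (ht.trans hη₁)).trans (by linarith)
  rw [phi_add_sub_phi, abs_mul, abs_of_pos (phi_pos x), mul_comm]
  exact mul_le_mul_of_nonneg_right hexp (phi_pos x).le

lemma abs_phi_add_sub_phi_le_add_exp {v₀ x w : ℝ} (hv₀ : 0 < v₀) (hw : |w| ≤ v₀)
    (hη₁ : √(2 * v₀) + 3 / 2 * v₀ ^ 2 ≤ 1) :
    |phi (x + w) - phi x| ≤ 2 * (√(2 * v₀) + 3 / 2 * v₀ ^ 2) * phi x + exp (-1 / v₀) := by
  have hr : √(2 / v₀) ^ 2 = 2 / v₀ := sq_sqrt (by positivity)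
  by_cases hx : |x| ≤ √(2 / v₀) + v₀
  · have hrv : √(2 / v₀) * v₀ = √(2 * v₀) := by
      rw [← sqrt_sq hv₀.le, ← sqrt_mul (by positivity), sqrt_sq hv₀.le]
      field_simp
    have hw2 : w ^ 2 ≤ v₀ ^ 2 := sq_abs w ▸ pow_le_pow_left₀ (abs_nonneg w) hw 2
    have ht : |x * w + w ^ 2 / 2| ≤ √(2 * v₀) + 3 / 2 * v₀ ^ 2 :=
      calc |x * w + w ^ 2 / 2| ≤ |x| * |w| + w ^ 2 / 2 := by
            have := abs_add_le (x * w) (w ^ 2 / 2)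
            rwa [abs_mul, abs_of_nonneg (by positivity : (0 : ℝ) ≤ w ^ 2 / 2)] at this
        _ ≤ (√(2 / v₀) + v₀) * v₀ + v₀ ^ 2 / 2 := by gcongr
        _ = √(2 * v₀) + 3 / 2 * v₀ ^ 2 := by rw [add_mul, hrv]; ring
    linarith [abs_phi_add_sub_phi_le ht hη₁, exp_pos (-1 / v₀)]
  · have hxw : √(2 / v₀) ≤ |x + w| := by
      linarith [add_sub_cancel_right x w ▸ abs_sub (x + w) w]
    have htail := abs_phi_sub_phi_le_of_le_abs (x := x) (sqrt_nonneg _) (by linarith) hxw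
    rw [hr, show -(2 / v₀) / 2 = -1 / v₀ by ring] at htail
    have hrel : 0 ≤ 2 * (√(2 * v₀) + 3 / 2 * v₀ ^ 2) * phi x :=
      mul_nonneg (by positivity) (phi_pos x).le
    linarith

lemma abs_sum_sub_sum_le {ι : Type*} (s : Finset ι) (f g : ι → ℝ) (a b : ℝ)
    (h : ∀ i ∈ s, |f i - g i| ≤ a * g i + b) :
    |∑ i ∈ s, f i - ∑ i ∈ s, g i| ≤ a * ∑ i ∈ s, g i + #s * b := by
  rw [← sum_sub_distrib, mul_sum, ← nsmul_eq_mul, ← sum_const, ← sum_add_distrib]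
  exact (abs_sum_le_sum_abs _ _).trans (sum_le_sum h)

theorem stmt3 :
    ∃ C : ℝ, 0 < C ∧ ∀ ε : ℝ, 0 < ε → ∃ δ : ℝ, 0 < δ ∧
      ∀ (d : ℕ) (s v : Fin d → ℝ) (v₀ : ℝ), 0 < v₀ → v₀ < δ →
        (∀ j, |v j| < v₀) →
        |(∑ j, phi (s j + v j)) - ∑ j, phi (s j)| ≤
          ε * (∑ j, phi (s j)) + C * d * Real.exp (-1 / v₀) := by
  refine ⟨1, one_pos, fun ε hε => ?_⟩
  set η : ℝ → ℝ := fun v₀ => √(2 * v₀) + 3 / 2 * v₀ ^ 2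
  have hη : Continuous η := by fun_prop
  obtain ⟨δ, hδ, hηδ⟩ := Metric.continuous_iff.mp hη 0 (min (ε / 2) 1) (by positivity)
  refine ⟨δ, hδ, fun d s v v₀ hv₀ hv₀δ hv => ?_⟩
  have hηv₀ : |η v₀| < min (ε / 2) 1 := by
    simpa [η, Real.dist_eq, abs_of_pos hv₀] using hηδ v₀ (by simpa [Real.dist_eq, abs_of_pos hv₀])
  have hη₁ : η v₀ ≤ 1 := (le_abs_self _).trans (hηv₀.le.trans (min_le_right _ _))
  have hηε : 2 * η v₀ ≤ ε := by linarith [le_abs_self (η v₀), min_le_left (ε / 2) 1]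
  have hterm : ∀ j ∈ Finset.univ, |phi (s j + v j) - phi (s j)| ≤ ε * phi (s j) + exp (-1 / v₀) :=
    fun j _ => (abs_phi_add_sub_phi_le_add_exp hv₀ (hv j).le hη₁).trans
      (by gcongr; exact (phi_pos _).le)
  simpa using abs_sum_sub_sum_le univ _ _ ε _ hterm
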